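/- Let q be a prime with q ≡ 5 (mod 8). Then for every positive integer n, r(q²·n², 2x² + qy² + qz²) = 2·r(n², x² + y² + 2z²) − r(n², 2x² + qy² + qz²). -/

import Mathlib

open Matrix

noncomputable section

/-- A ternary quadratic form `a·x² + b·y² + c·z² + d·yz + e·zx + g·xy`
with integer coefficients. -/
structure TernaryQF where
  a : ℤ
  b : ℤ
  c : ℤ
  d : ℤ
  e : ℤ
  g : ℤ
deriving DecidableEq

namespace TernaryQF

/-- Evaluation of the form in any commutative ring. -/
def evalR {R : Type*} [CommRing R] (f : TernaryQF) (x y z : R) : R :=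
  (f.a : R) * x ^ 2 + (f.b : R) * y ^ 2 + (f.c : R) * z ^ 2 +
    (f.d : R) * (y * z) + (f.e : R) * (z * x) + (f.g : R) * (x * y)

def eval (f : TernaryQF) (x y z : ℤ) : ℤ := f.evalR x y z

def evalVec (f : TernaryQF) (v : Fin 3 → ℤ) : ℤ := f.eval (v 0) (v 1) (v 2)

/-- Non-classic integral: the coefficients are coprime. -/
def NonClassic (f : TernaryQF) : Prop :=
  Nat.gcd f.a.natAbs (Nat.gcd f.b.natAbs (Nat.gcd f.c.natAbs
    (Nat.gcd f.d.natAbs (Nat.gcd f.e.natAbs f.g.natAbs)))) = 1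

/-- Positive definiteness (equivalent, for a rational symmetric matrix, to
positivity of the Gram matrix). -/
def PosDefn (f : TernaryQF) : Prop :=
  ∀ x y z : ℤ, ¬(x = 0 ∧ y = 0 ∧ z = 0) → 0 < f.eval x y z

/-- `r n f`: the number of representations of `n` by `f`. -/
def r (f : TernaryQF) (n : ℤ) : ℕ :=
  Set.ncard {v : Fin 3 → ℤ | f.evalVec v = n}

/-- `4·df`, four times the discriminant (determinant of the Gram matrix), an integer. -/
def disc4 (f : TernaryQF) : ℤ :=
  4 * f.a * f.b * f.c + f.g * f.d * f.e - f.a * f.d ^ 2 - f.b * f.e ^ 2 - f.c * f.g ^ 2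

/-- `h_p(df, λ) = (p^{λ+1}-1)/(p-1) - (−4df/p)·(p^{λ}-1)/(p-1)`, written via geometric sums. -/
def hFactor (f : TernaryQF) (p lam : ℕ) : ℤ :=
  (∑ i ∈ Finset.range (lam + 1), (p : ℤ) ^ i) -
    jacobiSym (-f.disc4) p * ∑ i ∈ Finset.range lam, (p : ℤ) ^ i

/-- A (positive definite non-classic integral) ternary form is strongly s-regular if it
represents a nonzero square and the representation numbers of squares satisfy the
multiplicative formula of Cooper–Lam type. -/
def StronglySRegular (f : TernaryQF) : Prop :=
  (∃ n : ℕ, 0 < n ∧ f.r ((n : ℤ) ^ 2) ≠ 0) ∧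
    ∀ n₁ n₂ : ℕ, 0 < n₁ → 0 < n₂ →
      (∀ p : ℕ, p.Prime → p ∣ n₁ → p = 2 ∨ (p : ℤ) ∣ f.disc4) →
      Odd n₂ → IsCoprime (n₂ : ℤ) f.disc4 →
      (f.r ((n₁ : ℤ) ^ 2 * (n₂ : ℤ) ^ 2) : ℤ) =
        (f.r ((n₁ : ℤ) ^ 2) : ℤ) *
          ∏ p ∈ n₂.primeFactors, f.hFactor p (n₂.factorization p)

/-- `m_s(f)`: the minimal positive integer whose square is represented by `f`. -/
def msf (f : TernaryQF) : ℕ := sInf {n : ℕ | 0 < n ∧ f.r ((n : ℤ) ^ 2) ≠ 0}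

/-- The (rational) Gram matrix of the form. -/
def gram (f : TernaryQF) : Matrix (Fin 3) (Fin 3) ℚ :=
  !![(f.a : ℚ), (f.g : ℚ) / 2, (f.e : ℚ) / 2;
     (f.g : ℚ) / 2, (f.b : ℚ), (f.d : ℚ) / 2;
     (f.e : ℚ) / 2, (f.d : ℚ) / 2, (f.c : ℚ)]

/-- Equivalence of ternary forms over ℤ. -/
def TEquiv (f g : TernaryQF) : Prop :=
  ∃ U : Matrix (Fin 3) (Fin 3) ℤ, IsUnit U.det ∧
    (U.map ((↑) : ℤ → ℚ)).transpose * f.gram * U.map ((↑) : ℤ → ℚ) = g.gram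

/-- The Gram matrix viewed over `ℚ_p`. -/
def gramPadic (p : ℕ) [Fact p.Prime] (f : TernaryQF) : Matrix (Fin 3) (Fin 3) ℚ_[p] :=
  f.gram.map (fun x : ℚ => (x : ℚ_[p]))

/-- The coercion `ℤ_p → ℚ_p`. -/
def coeQp {p : ℕ} [Fact p.Prime] (x : ℤ_[p]) : ℚ_[p] := x

/-- Two matrices over `ℚ_p` are equivalent over `ℤ_p` if `Uᵀ A U = B` for some
`U ∈ GL₃(ℤ_p)`. -/
def EquivZp (p : ℕ) [Fact p.Prime] (A B : Matrix (Fin 3) (Fin 3) ℚ_[p]) : Prop :=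
  ∃ U : Matrix (Fin 3) (Fin 3) ℤ_[p], IsUnit U.det ∧
    (U.map coeQp).transpose * A * U.map coeQp = B

/-- Two forms lie in the same genus: locally equivalent at every (finite) prime. -/
def SameGenus (f g : TernaryQF) : Prop :=
  ∀ (p : ℕ) [Fact p.Prime], EquivZp p (gramPadic p f) (gramPadic p g)

/-- `Λ_p(f) = {v ∈ ℤ³ : f(v+z) ≡ f(z) (mod p) for all z ∈ ℤ³}`. -/
def Lam (p : ℕ) (f : TernaryQF) : Set (Fin 3 → ℤ) :=
  {v | ∀ z : Fin 3 → ℤ, (p : ℤ) ∣ (f.evalVec (v + z) - f.evalVec z)}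

/-- `g` is a Watson `λ_p`-transform of `f`: `g` is obtained by expressing `f` on a basis
of `Λ_p(f)` and dividing by the largest power of `p` dividing all values. -/
def IsWatson (p : ℕ) (f g : TernaryQF) : Prop :=
  ∃ (B : Matrix (Fin 3) (Fin 3) ℤ) (k : ℕ),
    Set.range B.mulVec = Lam p f ∧
    (∀ v : Fin 3 → ℤ, f.evalVec (B.mulVec v) = (p : ℤ) ^ k * g.evalVec v) ∧
    ¬ ∀ v : Fin 3 → ℤ, (p : ℤ) ∣ g.evalVec v

/-- The order of the (finite, for positive definite forms) integral isometry group. -/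
def autCount (f : TernaryQF) : ℕ :=
  Set.ncard {U : Matrix (Fin 3) (Fin 3) ℤ | IsUnit U.det ∧
    (U.map ((↑) : ℤ → ℚ)).transpose * f.gram * U.map ((↑) : ℤ → ℚ) = f.gram}

end TernaryQF

open TernaryQF

/-!
Write `q = π π̄` in `ℤ[i]` and read `(x, y, z)` as `(x, y + z i) ∈ ℤ × ℤ[i]`, so that both forms
become `2u² + c N(w)`. A solution of `2x² + q N(w) = q²n²` has `q ∣ x` and `q ∣ N(w)`, hence
`π ∣ w` or `π̄ ∣ w`. Multiplying by `(q, π)` (resp. `(q, π̄)`) identifies the solutions of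
`2u² + N(w) = n²` with each of these two classes, and multiplying by `(q, q)` identifies the
solutions of `2u² + q N(w) = n²` with their intersection `q ∣ w`. Inclusion–exclusion gives the
identity.
-/

local notation "ℤ[i]" => GaussianInt

theorem Nat.Prime.not_natCast_dvd_two {q : ℕ} (hq : q.Prime) (hq2 : q ≠ 2) : ¬ (q : ℤ) ∣ 2 :=
  fun h => hq2 ((Nat.prime_dvd_prime_iff_eq hq Nat.prime_two).mp (Int.natCast_dvd_natCast.mp h))

namespace GaussianInt

theorem norm_eq_sq_add_sq (w : ℤ[i]) : w.norm = w.re ^ 2 + w.im ^ 2 := by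
  rw [Zsqrtd.norm_def]; ring

theorem prime_of_prime_norm {π : ℤ[i]} (h : Prime π.norm) : Prime π := by
  have : IsLocalHom (Zsqrtd.normMonoidHom (d := -1)) :=
    ⟨fun z => (Zsqrtd.isUnit_iff_norm_isUnit z).mpr⟩
  exact (Irreducible.of_map (f := Zsqrtd.normMonoidHom) h.irreducible).prime

theorem dvd_or_star_dvd_of_norm_dvd_norm {π w : ℤ[i]} (hπ : Prime π) (h : π.norm ∣ w.norm) :
    π ∣ w ∨ star π ∣ w := by
  have hdvd : π ∣ w * star w := by
    rw [← Zsqrtd.norm_eq_mul_conj]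
    exact (Dvd.intro _ (Zsqrtd.norm_eq_mul_conj π).symm).trans (Int.cast_dvd_cast _ _ h)
  refine (hπ.dvd_or_dvd hdvd).imp id fun h' => ?_
  simpa [starRingEnd_apply] using map_dvd (starRingEnd ℤ[i]) h'

-- If `π ∣ π̄`, then `π ∣ π + π̄ = 2 Re π`, so `q ∣ 4 (Re π)²`; hence `q` divides `Re π` and
-- then `Im π`, and `q² ∣ N(π) = q`.
theorem not_dvd_star_self {π : ℤ[i]} {q : ℤ} (hq : Prime q) (hq2 : ¬ q ∣ 2)
    (hπ : π.norm = q) : ¬ π ∣ star π := by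
  intro h
  have hsum : π ∣ ((2 * π.re : ℤ) : ℤ[i]) := by
    have : ((2 * π.re : ℤ) : ℤ[i]) = π + star π := by ext <;> simp; ring
    exact this ▸ dvd_add dvd_rfl h
  have hre : q ∣ π.re := by
    obtain ⟨c, hc⟩ := hsum
    have h4 : q ∣ 2 * π.re * (2 * π.re) := by
      refine ⟨c.norm, ?_⟩
      rw [← Zsqrtd.norm_intCast, hc, Zsqrtd.norm_mul, hπ]
    rcases hq.dvd_or_dvd h4 with h' | h' <;>
      exact (hq.dvd_or_dvd h').resolve_left hq2
  have hnorm := norm_eq_sq_add_sq π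
  obtain ⟨s, hs⟩ := hre
  have him : q ∣ π.im := by
    refine hq.dvd_of_dvd_pow (n := 2) ⟨1 - q * s ^ 2, ?_⟩
    rw [hπ, hs] at hnorm
    linear_combination -hnorm
  obtain ⟨t, ht⟩ := him
  refine hq.not_isUnit (isUnit_of_dvd_one ⟨s ^ 2 + t ^ 2, mul_left_cancel₀ hq.ne_zero ?_⟩)
  rw [hπ, hs, ht] at hnorm; linear_combination hnorm

theorem norm_dvd_of_dvd_of_star_dvd {π w : ℤ[i]} {q : ℤ} (hq : Prime q) (hq2 : ¬ q ∣ 2)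
    (hπ : π.norm = q) (h : π ∣ w) (h' : star π ∣ w) : (q : ℤ[i]) ∣ w := by
  have hπ' : (star π).norm = q := by rw [Zsqrtd.norm_conj, hπ]
  obtain ⟨c, rfl⟩ := h
  have hc : star π ∣ c := by
    refine ((prime_of_prime_norm (hπ' ▸ hq)).dvd_or_dvd h').resolve_left fun h'' => ?_
    exact not_dvd_star_self hq hq2 hπ' (by rwa [star_star])
  obtain ⟨d, rfl⟩ := hc
  exact ⟨d, by rw [← hπ, Zsqrtd.norm_eq_mul_conj, mul_assoc]⟩

end GaussianInt

def sqAddNormSols (a c m : ℤ) : Set (ℤ × ℤ[i]) := {p | a * p.1 ^ 2 + c * p.2.norm = m}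

theorem mem_sqAddNormSols {a c m : ℤ} {p : ℤ × ℤ[i]} :
    p ∈ sqAddNormSols a c m ↔ a * p.1 ^ 2 + c * p.2.norm = m := Iff.rfl

theorem sqAddNormSols_finite {a c : ℤ} (ha : 0 < a) (hc : 0 < c) (m : ℤ) :
    (sqAddNormSols a c m).Finite := by
  let box := Set.Icc (-m) m
  refine ((box ×ˢ box ×ˢ box).toFinite.preimage
    (f := fun p : ℤ × ℤ[i] => (p.1, p.2.re, p.2.im)) ?_).subset ?_
  · rintro ⟨u, w⟩ - ⟨u', w'⟩ - h
    simp only [Prod.mk.injEq] at h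
    obtain ⟨rfl, hre, him⟩ := h
    exact Prod.ext rfl (Zsqrtd.ext hre him)
  · rintro ⟨u, w⟩ (h : a * u ^ 2 + c * w.norm = m)
    rw [GaussianInt.norm_eq_sq_add_sq] at h
    have bound : ∀ x : ℤ, x ^ 2 ≤ m → x ∈ box := fun x hx =>
      ⟨by linarith [Int.le_self_sq (-x)], by linarith [Int.le_self_sq x]⟩
    refine ⟨bound u ?_, bound w.re ?_, bound w.im ?_⟩ <;>
      nlinarith [sq_nonneg u, sq_nonneg w.re, sq_nonneg w.im]

section Scaling

variable {q a : ℤ}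

theorem dvd_fst_of_mem_sqAddNormSols (hq : Prime q) (hqa : ¬ q ∣ a) {m : ℤ} {p : ℤ × ℤ[i]}
    (hp : p ∈ sqAddNormSols a q (q ^ 2 * m)) : q ∣ p.1 := by
  rw [mem_sqAddNormSols] at hp
  have : q ∣ a * p.1 ^ 2 := ⟨q * m - p.2.norm, by linear_combination hp⟩
  exact hq.dvd_of_dvd_pow ((hq.dvd_or_dvd this).resolve_left hqa)

theorem dvd_norm_of_mem_sqAddNormSols (hq : Prime q) (hqa : ¬ q ∣ a) {m : ℤ} {p : ℤ × ℤ[i]}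
    (hp : p ∈ sqAddNormSols a q (q ^ 2 * m)) : q ∣ p.2.norm := by
  obtain ⟨u, hu⟩ := dvd_fst_of_mem_sqAddNormSols hq hqa hp
  refine ⟨m - a * u ^ 2, mul_left_cancel₀ hq.ne_zero ?_⟩
  rw [mem_sqAddNormSols] at hp
  linear_combination hp - a * (p.1 + q * u) * hu

theorem image_scale_sqAddNormSols (hq : Prime q) (hqa : ¬ q ∣ a) {ρ : ℤ[i]} {c : ℤ}
    (hρ : ρ.norm = q * c) (m : ℤ) :
    Prod.map (q * ·) (ρ * ·) '' sqAddNormSols a c m =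
      {p ∈ sqAddNormSols a q (q ^ 2 * m) | ρ ∣ p.2} := by
  ext ⟨x, w⟩
  constructor
  · rintro ⟨⟨u, w'⟩, (h : a * u ^ 2 + c * w'.norm = m), hx⟩
    simp only [Prod.map, Prod.mk.injEq] at hx
    obtain ⟨rfl, rfl⟩ := hx
    refine ⟨?_, dvd_mul_right _ _⟩
    change a * (q * u) ^ 2 + q * (ρ * w').norm = q ^ 2 * m
    rw [Zsqrtd.norm_mul, hρ, ← h]; ring
  · rintro ⟨hp, w', rfl⟩
    obtain ⟨u, rfl⟩ := dvd_fst_of_mem_sqAddNormSols hq hqa hp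
    refine ⟨⟨u, w'⟩, mul_left_cancel₀ (pow_ne_zero 2 hq.ne_zero) ?_, rfl⟩
    change a * (q * u) ^ 2 + q * (ρ * w').norm = q ^ 2 * m at hp
    rw [Zsqrtd.norm_mul, hρ] at hp
    linear_combination hp

theorem ncard_sqAddNormSols_dvd (hq : Prime q) (hqa : ¬ q ∣ a) {ρ : ℤ[i]} {c : ℤ}
    (hc : c ≠ 0) (hρ : ρ.norm = q * c) (m : ℤ) :
    {p ∈ sqAddNormSols a q (q ^ 2 * m) | ρ ∣ p.2}.ncard = (sqAddNormSols a c m).ncard := by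
  rw [← image_scale_sqAddNormSols hq hqa hρ, Set.ncard_image_of_injective]
  have hρ0 : ρ ≠ 0 := by
    rintro rfl
    exact mul_ne_zero hq.ne_zero hc (by simpa using hρ.symm)
  exact (mul_right_injective₀ hq.ne_zero).prodMap (mul_right_injective₀ hρ0)

end Scaling

open GaussianInt in
theorem ncard_sqAddNormSols_sq_mul_add {q : ℕ} (hq : q.Prime) (hq4 : q % 4 = 1) {a : ℤ}
    (ha : 0 < a) (hqa : ¬ (q : ℤ) ∣ a) (m : ℤ) :
    (sqAddNormSols a q (q ^ 2 * m)).ncard + (sqAddNormSols a q m).ncard =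
      2 * (sqAddNormSols a 1 m).ncard := by
  have : Fact q.Prime := ⟨hq⟩
  obtain ⟨x, y, hxy⟩ := Nat.Prime.sq_add_sq (p := q) (by omega)
  obtain ⟨π, hπ⟩ : ∃ π : ℤ[i], π.norm = q :=
    ⟨⟨x, y⟩, by simp only [norm_eq_sq_add_sq]; exact_mod_cast hxy⟩
  have hπ' : (star π).norm = q := by rw [Zsqrtd.norm_conj, hπ]
  have hq' : Prime (q : ℤ) := Nat.prime_iff_prime_int.mp hq
  have hq2 : ¬ (q : ℤ) ∣ 2 := hq.not_natCast_dvd_two (by omega)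
  set S := sqAddNormSols a q (q ^ 2 * m)
  have hS : S.Finite := sqAddNormSols_finite ha (by exact_mod_cast hq.pos) _
  have hunion : {p ∈ S | π ∣ p.2} ∪ {p ∈ S | star π ∣ p.2} = S := by
    rw [← Set.sep_or, Set.sep_eq_self_iff_mem_true]
    intro p hp
    exact dvd_or_star_dvd_of_norm_dvd_norm (prime_of_prime_norm (hπ ▸ hq'))
      (hπ ▸ dvd_norm_of_mem_sqAddNormSols hq' hqa hp)
  have hinter : {p ∈ S | π ∣ p.2} ∩ {p ∈ S | star π ∣ p.2} =
      {p ∈ S | ((q : ℤ) : ℤ[i]) ∣ p.2} := by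
    rw [← Set.sep_and]
    ext p
    refine and_congr_right fun _ => ⟨fun h => norm_dvd_of_dvd_of_star_dvd hq' hq2 hπ h.1 h.2,
      fun h => ⟨dvd_trans ?_ h, dvd_trans ?_ h⟩⟩
    all_goals rw [← hπ, Zsqrtd.norm_eq_mul_conj]
    exacts [dvd_mul_right _ _, dvd_mul_left _ _]
  have hcardπ : {p ∈ S | π ∣ p.2}.ncard = (sqAddNormSols a 1 m).ncard :=
    ncard_sqAddNormSols_dvd hq' hqa one_ne_zero (by rw [hπ, mul_one]) m
  have hcardπ' : {p ∈ S | star π ∣ p.2}.ncard = (sqAddNormSols a 1 m).ncard :=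
    ncard_sqAddNormSols_dvd hq' hqa one_ne_zero (by rw [hπ', mul_one]) m
  have hcardq : {p ∈ S | ((q : ℤ) : ℤ[i]) ∣ p.2}.ncard = (sqAddNormSols a q m).ncard :=
    ncard_sqAddNormSols_dvd hq' hqa hq'.ne_zero (Zsqrtd.norm_intCast _) m
  have := Set.ncard_union_add_ncard_inter {p ∈ S | π ∣ p.2} {p ∈ S | star π ∣ p.2}
    (hS.subset (Set.sep_subset _ _)) (hS.subset (Set.sep_subset _ _))
  rw [hunion, hinter, hcardπ, hcardπ', hcardq] at this
  omega

namespace TernaryQF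

theorem r_eq_ncard_sqAddNormSols {f : TernaryQF} {a c : ℤ} (e : (Fin 3 → ℤ) ≃ ℤ × ℤ[i])
    (he : ∀ v, f.evalVec v = a * (e v).1 ^ 2 + c * (e v).2.norm) (m : ℤ) :
    f.r m = (sqAddNormSols a c m).ncard := by
  rw [r, ← Set.ncard_image_of_injective _ e.injective, e.image_eq_preimage_symm]
  congr 1
  ext p
  simp only [Set.mem_preimage, Set.mem_ofPred_eq, he, Equiv.apply_symm_apply, mem_sqAddNormSols]

def splitFirstEquiv : (Fin 3 → ℤ) ≃ ℤ × ℤ[i] where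
  toFun v := (v 0, ⟨v 1, v 2⟩)
  invFun p := ![p.1, p.2.re, p.2.im]
  left_inv v := by ext i; fin_cases i <;> rfl
  right_inv _ := rfl

def splitLastEquiv : (Fin 3 → ℤ) ≃ ℤ × ℤ[i] where
  toFun v := (v 2, ⟨v 0, v 1⟩)
  invFun p := ![p.2.re, p.2.im, p.1]
  left_inv v := by ext i; fin_cases i <;> rfl
  right_inv _ := rfl

theorem r_mk_diag_left (a c m : ℤ) :
    (TernaryQF.mk a c c 0 0 0).r m = (sqAddNormSols a c m).ncard :=
  r_eq_ncard_sqAddNormSols splitFirstEquiv (fun v => by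
    change _ = a * v 0 ^ 2 + c * Zsqrtd.norm ⟨v 1, v 2⟩
    simp only [evalVec, eval, evalR, Int.cast_id, Zsqrtd.norm_def]; ring) m

theorem r_mk_diag_right (a c m : ℤ) :
    (TernaryQF.mk c c a 0 0 0).r m = (sqAddNormSols a c m).ncard :=
  r_eq_ncard_sqAddNormSols splitLastEquiv (fun v => by
    change _ = a * v 2 ^ 2 + c * Zsqrtd.norm ⟨v 0, v 1⟩
    simp only [evalVec, eval, evalR, Int.cast_id, Zsqrtd.norm_def]; ring) m

end TernaryQF

theorem stmt7_general (q : ℕ) (hq : q.Prime) (h5 : q % 8 = 5) (n : ℕ) :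
    ((TernaryQF.mk 2 q q 0 0 0).r ((q : ℤ) ^ 2 * (n : ℤ) ^ 2) : ℤ) =
      2 * ((TernaryQF.mk 1 1 2 0 0 0).r ((n : ℤ) ^ 2) : ℤ) -
        ((TernaryQF.mk 2 q q 0 0 0).r ((n : ℤ) ^ 2) : ℤ) := by
  have key := ncard_sqAddNormSols_sq_mul_add hq (by omega) two_pos
    (hq.not_natCast_dvd_two (by omega)) ((n : ℤ) ^ 2)
  rw [r_mk_diag_left, r_mk_diag_left, r_mk_diag_right]
  omega

/-- for `q ≡ 5 (mod 8)` prime,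
`r(q²n², 2x²+qy²+qz²) = 2·r(n², x²+y²+2z²) − r(n², 2x²+qy²+qz²)`. -/
theorem stmt7 (q : ℕ) (hq : q.Prime) (h5 : q % 8 = 5) (n : ℕ) (hn : 0 < n) :
    ((TernaryQF.mk 2 q q 0 0 0).r ((q : ℤ) ^ 2 * (n : ℤ) ^ 2) : ℤ) =
      2 * ((TernaryQF.mk 1 1 2 0 0 0).r ((n : ℤ) ^ 2) : ℤ) -
        ((TernaryQF.mk 2 q q 0 0 0).r ((n : ℤ) ^ 2) : ℤ) :=
  stmt7_general q hq h5 n
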